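/- Assume p ≡ 3 (mod 4). Then there exist an odd natural number n with (p − 1)/2 dividing n² − 1, an element λ ∈ K̄ of order 2, and c ∈ N such that λ(z) = c·zⁿ for all z ∈ R, λ(z) = c⁻¹·zⁿ for all z ∈ N, and cⁿ = c. -/

import Mathlib

instance (X : Type*) [DecidableEq X] : DecidableEq (OnePoint X) :=
  inferInstanceAs (DecidableEq (Option X))

/-- The translation `z ↦ z + a` on `ℤ/p ∪ {∞}`, fixing `∞`. -/
def ptrans (p : ℕ) (a : ZMod p) : Equiv.Perm (OnePoint (ZMod p)) :=
  Equiv.optionCongr (Equiv.addRight a)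

/-- The map `z ↦ a z` on `ℤ/p ∪ {∞}`, fixing `∞`, for `a ≠ 0`. -/
def pmul (p : ℕ) [Fact p.Prime] (a : ZMod p) (ha : a ≠ 0) : Equiv.Perm (OnePoint (ZMod p)) :=
  Equiv.optionCongr (Equiv.mulLeft₀ a ha)

/-- Multiplication by `a` extended to `ℤ/p ∪ {∞}` (with `a·∞ = ∞`). -/
def opSmul (p : ℕ) (a : ZMod p) : OnePoint (ZMod p) → OnePoint (ZMod p) :=
  fun x => Option.map (fun z => a * z) x

/-- Underlying function of the map `z ↦ -1/z`. -/
def negInvFun (p : ℕ) : OnePoint (ZMod p) → OnePoint (ZMod p)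
  | Option.none => Option.some (0 : ZMod p)
  | Option.some z => if z = 0 then Option.none else Option.some (-z⁻¹ : ZMod p)

/-- The permutation `z ↦ -1/z` of `ℤ/p ∪ {∞}` (sending `0 ↦ ∞` and `∞ ↦ 0`). -/
def negInvPerm (p : ℕ) [Fact p.Prime] : Equiv.Perm (OnePoint (ZMod p)) :=
  Function.Involutive.toPerm (negInvFun p) (by
    intro x
    match x with
    | Option.none => simp [negInvFun] <;> rfl
    | Option.some z =>
      by_cases hz : z = 0
      · simp [negInvFun, hz] <;> rfl
      · have h1 : (-z⁻¹ : ZMod p) ≠ 0 := by simp [hz]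
        simp [negInvFun, hz, h1, inv_neg, inv_inv] <;> rfl)

/-- The involution `(0 ∞)(1 3)(2 6)(4 5)`. -/
def inv1 (p : ℕ) : Equiv.Perm (OnePoint (ZMod p)) :=
  Equiv.swap ((0 : ZMod p) : OnePoint (ZMod p)) OnePoint.infty *
  Equiv.swap ((1 : ZMod p) : OnePoint (ZMod p)) ((3 : ZMod p) : OnePoint (ZMod p)) *
  Equiv.swap ((2 : ZMod p) : OnePoint (ZMod p)) ((6 : ZMod p) : OnePoint (ZMod p)) *
  Equiv.swap ((4 : ZMod p) : OnePoint (ZMod p)) ((5 : ZMod p) : OnePoint (ZMod p))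

/-- The involution `(0 ∞)(1 5)(2 3)(4 6)`. -/
def inv2 (p : ℕ) : Equiv.Perm (OnePoint (ZMod p)) :=
  Equiv.swap ((0 : ZMod p) : OnePoint (ZMod p)) OnePoint.infty *
  Equiv.swap ((1 : ZMod p) : OnePoint (ZMod p)) ((5 : ZMod p) : OnePoint (ZMod p)) *
  Equiv.swap ((2 : ZMod p) : OnePoint (ZMod p)) ((3 : ZMod p) : OnePoint (ZMod p)) *
  Equiv.swap ((4 : ZMod p) : OnePoint (ZMod p)) ((6 : ZMod p) : OnePoint (ZMod p))

/-- The set of nonzero squares in `ℤ/p`. -/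
def Rset (p : ℕ) : Set (ZMod p) := {a | a ≠ 0 ∧ IsSquare a}

/-- The set of nonsquares in `(ℤ/p)*`. -/
def Nset (p : ℕ) : Set (ZMod p) := {a | a ≠ 0 ∧ ¬ IsSquare a}


/-!
The stabiliser in `G` of a point has order `p * (p - 1) / 2`, which is odd because
`p ≡ 3 (mod 4)`, so no involution of `G` fixes a point. In the stabiliser of `∞` the translations
form a normal Sylow `p`-subgroup; hence an element fixing `0` and `∞` conjugates `z ↦ z + 1` to
some `z ↦ z + b` and is therefore the scaling `z ↦ b z`, and counting shows that these are exactly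
the scalings by nonzero squares. An element `τ ∈ G` swapping `0` and `∞` normalises this cyclic
group, acting on it as `u ↦ u ^ n` with `n` odd, and `τ ^ 2` is one of these scalings.
Multiplying `τ` by a suitable square scaling makes it an involution `λ`; then `λ z = c z ^ n` on
squares with `c = λ 1`, which must be a nonsquare since otherwise `λ` would fix a square root of
`c`, and `λ` is determined on nonsquares by `λ c = 1`. A final correction of `λ` by a square
scaling achieves `c ^ n = c`.
-/

open Equiv MulAction

theorem Subgroup.normal_of_card_eq_prime_of_index_lt {K : Type*} [Group K] [Finite K] {p : ℕ}
    [Fact p.Prime] {P : Subgroup K} (hP : Nat.card P = p) (hidx : P.index < p) : P.Normal := by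
  have hpP : IsPGroup p P := IsPGroup.of_card (n := 1) (by rw [hP, pow_one])
  have hidx0 : 0 < P.index := Nat.pos_of_ne_zero P.index_ne_zero_of_finite
  have hndvd : ¬ p ∣ P.index := fun h => (Nat.le_of_dvd hidx0 h).not_gt hidx
  have hsyl : Nat.card (Sylow p K) = 1 := by
    have hdvd := (hpP.toSylow hndvd).card_dvd_index
    rw [IsPGroup.toSylow_coe] at hdvd
    exact (card_sylow_modEq_one p K).eq_of_lt_of_lt
      ((Nat.le_of_dvd hidx0 hdvd).trans_lt hidx) (Fact.out : p.Prime).one_lt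
  have : Subsingleton (Sylow p K) := (Nat.card_eq_one_iff_unique.mp hsyl).1
  simpa using (hpP.toSylow hndvd).normal_of_subsingleton

theorem card_inf_stabilizer_mul_ncard_orbit {X : Type*} (K : Subgroup (Perm X)) (x : X) :
    Nat.card ↥(K ⊓ stabilizer (Perm X) x) * (orbit K x).ncard = Nat.card K := by
  have h : stabilizer K x = (stabilizer (Perm X) x).subgroupOf K := by
    ext g; simp [Subgroup.mem_subgroupOf, mem_stabilizer_iff, Subgroup.smul_def]
  rw [← index_stabilizer, ← (stabilizer K x).card_mul_index, h, inf_comm,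
    ← Subgroup.subgroupOf_map_subtype, Subgroup.card_map_of_injective K.subtype_injective]

theorem eq_one_of_sq_eq_one_of_odd_card {K : Type*} [Group K] (hK : Odd (Nat.card K)) {g : K}
    (hg : g ^ 2 = 1) : g = 1 := by
  rw [← orderOf_eq_one_iff]
  exact Nat.eq_one_of_dvd_coprimes (Nat.coprime_two_left.mpr hK) (orderOf_dvd_of_pow_eq_one hg)
    (orderOf_dvd_natCard g)

theorem sq_pow_succ_div_two {M : Type*} [Monoid M] {q : M} {d : ℕ} (hd : Odd d) (hq : q ^ d = 1) :
    (q ^ ((d + 1) / 2)) ^ 2 = q := by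
  rw [← pow_mul, Nat.div_mul_cancel hd.add_one.two_dvd, pow_succ, hq, one_mul]

theorem exists_pow_succ_eq_one_and_mul_pow_eq_self {M : Type*} [CommMonoid M] [HasDistribNeg M]
    {d n : ℕ} (hd : Odd d) (hn : Odd n) (hdn : d ∣ n ^ 2 - 1) {c : M} (hc : c ^ d = -1) :
    ∃ u : M, u ^ d = 1 ∧ u ^ (n + 1) = 1 ∧ (u * c) ^ n = u * c := by
  obtain ⟨k, rfl⟩ := hn
  have hk : d ∣ k * (k + 1) := by
    rw [show (2 * k + 1) ^ 2 - 1 = 2 ^ 2 * (k * (k + 1)) from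
      Nat.sub_eq_of_eq_add (by ring)] at hdn
    exact (Nat.Coprime.pow_right 2 (Nat.coprime_two_right.mpr hd)).dvd_of_dvd_mul_left hdn
  obtain ⟨m, hm⟩ := hk
  set w := -c
  have hw : w ^ d = 1 := by rw [hd.neg_pow, hc, neg_neg]
  have hwk : w ^ (k * (k + 1)) = 1 := by rw [hm, pow_mul, hw, one_pow]
  have huc : w ^ k * c = -w ^ (k + 1) := by rw [← neg_neg c, pow_succ, mul_neg]
  refine ⟨w ^ k, by rw [← pow_mul, mul_comm, pow_mul, hw, one_pow], ?_, ?_⟩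
  · rw [← pow_mul, show k * (2 * k + 1 + 1) = k * (k + 1) * 2 by ring, pow_mul, hwk, one_pow]
  · rw [huc, (odd_two_mul_add_one k).neg_pow, ← pow_mul,
      show (k + 1) * (2 * k + 1) = k * (k + 1) * 2 + (k + 1) by ring, pow_add, pow_mul, hwk,
      one_pow, one_mul]

theorem odd_div_two_of_mod_four_eq_three {p : ℕ} (hp : p % 4 = 3) : Odd (p / 2) :=
  Nat.odd_iff.mpr (by omega)

section Scalings
variable {p : ℕ}

def scale (p : ℕ) : (ZMod p)ˣ →* Perm (OnePoint (ZMod p)) where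
  toFun u := (MulAction.toPermHom (ZMod p)ˣ (ZMod p) u).optionCongr
  map_one' := by rw [map_one]; exact optionCongr_one
  map_mul' u v := by rw [map_mul]; exact optionCongr_trans _ _

@[simp] theorem scale_infty (u : (ZMod p)ˣ) : scale p u OnePoint.infty = OnePoint.infty := rfl

@[simp] theorem scale_some (u : (ZMod p)ˣ) (z : ZMod p) :
    scale p u (OnePoint.some z) = OnePoint.some (u * z) := rfl

theorem scale_injective [NeZero p] : Function.Injective (scale p) := fun u v h =>
  Units.ext (by simpa using congr($h (OnePoint.some 1)))

@[simp] theorem ptrans_infty (a : ZMod p) : ptrans p a OnePoint.infty = OnePoint.infty := rfl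

@[simp] theorem ptrans_some (a z : ZMod p) :
    ptrans p a (OnePoint.some z) = OnePoint.some (z + a) := rfl

def translation (p : ℕ) : Multiplicative (ZMod p) →* Perm (OnePoint (ZMod p)) where
  toFun a := ptrans p a.toAdd
  map_one' := Equiv.ext fun x => by cases x <;> simp
  map_mul' a b := Equiv.ext fun x => by cases x <;> simp [add_left_comm, add_comm]

variable [Fact p.Prime]

theorem translation_injective : Function.Injective (translation p) := fun a b h => by
  simpa [translation] using congr($h (OnePoint.some 0))

theorem exists_eq_scale_of_conj_ptrans {g : Perm (OnePoint (ZMod p))}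
    (h0 : g (OnePoint.some 0) = OnePoint.some 0) (hinf : g OnePoint.infty = OnePoint.infty)
    {b : ZMod p} (hb : g * ptrans p 1 * g⁻¹ = ptrans p b) : ∃ u, g = scale p u := by
  have hstep (z : ZMod p) : g (OnePoint.some (z + 1)) = ptrans p b (g (OnePoint.some z)) := by
    rw [← hb]; simp
  have hnat (k : ℕ) : g (OnePoint.some k) = OnePoint.some (b * k) := by
    induction k with
    | zero => simpa using h0
    | succ k ih => push_cast; rw [hstep, ih, ptrans_some, mul_add_one]
  have hall (z : ZMod p) : g (OnePoint.some z) = OnePoint.some (b * z) := by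
    simpa using hnat z.val
  have hb0 : b ≠ 0 := by
    rintro rfl
    exact one_ne_zero
      (OnePoint.coe_injective (g.injective ((hall 1).trans (by simpa using h0.symm))))
  refine ⟨Units.mk0 b hb0, Equiv.ext fun x => ?_⟩
  cases x with
  | infty => exact hinf
  | coe z => exact hall z

theorem mem_rootsOfUnity_iff_isSquare {u : (ZMod p)ˣ} :
    u ∈ rootsOfUnity (p / 2) (ZMod p) ↔ IsSquare (u : ZMod p) := by
  rw [mem_rootsOfUnity, ZMod.euler_criterion p u.ne_zero, ← Units.val_pow_eq_pow_val,
    Units.val_eq_one]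

theorem mem_Nset_iff (hp2 : p ≠ 2) {z : ZMod p} : z ∈ Nset p ↔ z ^ (p / 2) = -1 := by
  have : Fact (2 < p) := ⟨(Fact.out : p.Prime).two_le.lt_of_ne' hp2⟩
  refine ⟨fun ⟨hz, hsq⟩ => (ZMod.pow_div_two_eq_neg_one_or_one p hz).resolve_left
    (mt (ZMod.euler_criterion p hz).mpr hsq), fun h => ?_⟩
  have hz : z ≠ 0 := by
    rintro rfl
    rw [zero_pow (by have := (Fact.out : p.Prime).two_le; omega)] at h
    exact neg_ne_zero.mpr one_ne_zero h.symm
  exact ⟨hz, fun hsq => ZMod.neg_one_ne_one (h.symm.trans ((ZMod.euler_criterion p hz).mp hsq))⟩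

end Scalings

def SwapsZeroInfty {p : ℕ} (σ : Perm (OnePoint (ZMod p))) : Prop :=
  σ (OnePoint.some 0) = OnePoint.infty ∧ σ OnePoint.infty = OnePoint.some 0

def ConjScaleByPow {p : ℕ} (n : ℕ) (σ : Perm (OnePoint (ZMod p))) : Prop :=
  ∀ u ∈ rootsOfUnity (p / 2) (ZMod p), σ * scale p u * σ⁻¹ = scale p (u ^ n)

section Swaps
variable {p n : ℕ} {σ : Perm (OnePoint (ZMod p))}

theorem SwapsZeroInfty.scale_mul (hσ : SwapsZeroInfty σ) (u : (ZMod p)ˣ) :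
    SwapsZeroInfty (scale p u * σ) := by
  simp [SwapsZeroInfty, hσ.1, hσ.2]

theorem SwapsZeroInfty.conj_apply_infty (hσ : SwapsZeroInfty σ)
    {g : Perm (OnePoint (ZMod p))} (h0 : g (OnePoint.some 0) = OnePoint.some 0) :
    (σ * g * σ⁻¹) OnePoint.infty = OnePoint.infty := by
  simp [Perm.mul_apply, Perm.inv_eq_iff_eq.mpr hσ.1.symm, h0, hσ.1]

theorem SwapsZeroInfty.conj_apply_zero (hσ : SwapsZeroInfty σ)
    {g : Perm (OnePoint (ZMod p))} (hinf : g OnePoint.infty = OnePoint.infty) :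
    (σ * g * σ⁻¹) (OnePoint.some 0) = OnePoint.some 0 := by
  simp [Perm.mul_apply, Perm.inv_eq_iff_eq.mpr hσ.2.symm, hinf, hσ.2]

theorem SwapsZeroInfty.ne_one (hσ : SwapsZeroInfty σ) : σ ≠ 1 := by
  rintro rfl
  exact OnePoint.coe_ne_infty _ hσ.1

theorem SwapsZeroInfty.exists_apply_some (hσ : SwapsZeroInfty σ) {z : ZMod p} (hz : z ≠ 0) :
    ∃ c, σ (OnePoint.some z) = OnePoint.some c :=
  Option.ne_none_iff_exists'.mp fun h =>
    hz (OnePoint.coe_injective (σ.injective (h.trans hσ.1.symm)))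

theorem ConjScaleByPow.apply_scale (hσ : ConjScaleByPow n σ) {u : (ZMod p)ˣ}
    (hu : u ∈ rootsOfUnity (p / 2) (ZMod p)) (x : OnePoint (ZMod p)) :
    σ (scale p u x) = scale p (u ^ n) (σ x) := by
  rw [← hσ u hu]; simp

theorem ConjScaleByPow.scale_mul (hσ : ConjScaleByPow n σ) (u : (ZMod p)ˣ) :
    ConjScaleByPow n (scale p u * σ) := by
  intro v hv
  rw [mul_inv_rev, show scale p u * σ * scale p v * (σ⁻¹ * (scale p u)⁻¹) =
    scale p u * (σ * scale p v * σ⁻¹) * (scale p u)⁻¹ by group, hσ v hv, ← map_inv, ← map_mul,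
    ← map_mul, mul_comm u, mul_inv_cancel_right]

theorem ConjScaleByPow.sq_scale_mul (hσ : ConjScaleByPow n σ) {u : (ZMod p)ˣ}
    (hu : u ∈ rootsOfUnity (p / 2) (ZMod p)) :
    (scale p u * σ) ^ 2 = scale p (u ^ (n + 1)) * σ ^ 2 := by
  rw [sq, sq, show scale p u * σ * (scale p u * σ) = scale p u * (σ * scale p u * σ⁻¹) * (σ * σ) by
    group, hσ u hu, ← map_mul, ← pow_succ']

variable [Fact p.Prime] {c : ZMod p}

theorem ConjScaleByPow.apply_some_of_isSquare (hσ : ConjScaleByPow n σ)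
    (hc : σ (OnePoint.some 1) = OnePoint.some c) {z : ZMod p} (hz : z ≠ 0) (hsq : IsSquare z) :
    σ (OnePoint.some z) = OnePoint.some (c * z ^ n) := by
  have := hσ.apply_scale (mem_rootsOfUnity_iff_isSquare.mpr (by simpa using hsq) :
    Units.mk0 z hz ∈ _) (OnePoint.some 1)
  rwa [scale_some, hc, scale_some, Units.val_pow_eq_pow_val, Units.val_mk0, mul_one,
    mul_comm] at this

theorem ConjScaleByPow.apply_some_of_mem_Nset (hp2 : p ≠ 2) (hσ : ConjScaleByPow n σ)
    (hσ2 : σ ^ 2 = 1) (hc : σ (OnePoint.some 1) = OnePoint.some c) (hcN : c ∈ Nset p)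
    {z : ZMod p} (hz : z ∈ Nset p) : σ (OnePoint.some z) = OnePoint.some ((c⁻¹ * z) ^ n) := by
  have hw0 : c⁻¹ * z ≠ 0 := mul_ne_zero (inv_ne_zero hcN.1) hz.1
  have hw : IsSquare (c⁻¹ * z) := by
    rw [ZMod.euler_criterion p hw0, mul_pow, inv_pow, (mem_Nset_iff hp2).mp hcN,
      (mem_Nset_iff hp2).mp hz, inv_neg_one, neg_one_mul, neg_neg]
  have hσc : σ (OnePoint.some c) = OnePoint.some 1 := by
    rw [← hc, ← Perm.mul_apply, ← sq, hσ2, Perm.one_apply]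
  have := hσ.apply_scale (mem_rootsOfUnity_iff_isSquare.mpr (by simpa using hw) :
    Units.mk0 _ hw0 ∈ _) (OnePoint.some c)
  rwa [scale_some, hσc, scale_some, Units.val_pow_eq_pow_val, Units.val_mk0, mul_one,
    mul_comm, mul_inv_cancel_left₀ hcN.1] at this

end Swaps

abbrev zeroInftyStabilizer {p : ℕ} (G : Subgroup (Perm (OnePoint (ZMod p)))) :
    Subgroup (Perm (OnePoint (ZMod p))) :=
  G ⊓ stabilizer (Perm _) (OnePoint.infty : OnePoint (ZMod p)) ⊓
    stabilizer (Perm _) (OnePoint.some (0 : ZMod p))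

theorem mem_zeroInftyStabilizer {p : ℕ} {G : Subgroup (Perm (OnePoint (ZMod p)))}
    {g : Perm (OnePoint (ZMod p))} : g ∈ zeroInftyStabilizer G ↔
      g ∈ G ∧ g OnePoint.infty = OnePoint.infty ∧ g (OnePoint.some 0) = OnePoint.some 0 := by
  simp [and_assoc, mem_stabilizer_iff]

structure IsPSL2Like (p : ℕ) (G : Subgroup (Perm (OnePoint (ZMod p)))) : Prop where
  exists_apply_eq : ∀ x y : OnePoint (ZMod p), ∃ g ∈ G, g x = y
  card_eq : Nat.card G = (p ^ 3 - p) / 2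
  ptrans_mem : ∀ a : ZMod p, ptrans p a ∈ G

namespace IsPSL2Like
variable {p : ℕ} [Fact p.Prime] {G : Subgroup (Perm (OnePoint (ZMod p)))}

theorem card_eq_mul (hG : IsPSL2Like p G) (hp : p % 4 = 3) :
    Nat.card G = (p * (p / 2)) * (p + 1) := by
  rw [hG.card_eq]
  obtain ⟨k, rfl⟩ : ∃ k, p = 4 * k + 3 := ⟨p / 4, by omega⟩
  have : (4 * k + 3) ^ 3 - (4 * k + 3) =
      2 * ((4 * k + 3) * ((4 * k + 3) / 2) * (4 * k + 3 + 1)) := by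
    rw [show (4 * k + 3) / 2 = 2 * k + 1 by omega]
    zify [show 4 * k + 3 ≤ (4 * k + 3) ^ 3 from Nat.le_self_pow (by norm_num) _]
    ring
  omega

theorem card_stabilizer (hG : IsPSL2Like p G) (hp : p % 4 = 3) (x : OnePoint (ZMod p)) :
    Nat.card ↥(G ⊓ stabilizer (Perm _) x) = p * (p / 2) := by
  have horbit : (orbit G x).ncard = p + 1 := by
    have : orbit G x = Set.univ := Set.eq_univ_of_forall fun y => by
      obtain ⟨g, hg, rfl⟩ := hG.exists_apply_eq x y
      exact ⟨⟨g, hg⟩, rfl⟩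
    rw [this, Set.ncard_univ]
    simp [OnePoint, Nat.card_eq_fintype_card, ZMod.card]
  have := card_inf_stabilizer_mul_ncard_orbit G x
  rw [horbit, hG.card_eq_mul hp] at this
  exact Nat.eq_of_mul_eq_mul_right (by omega) this

theorem eq_one_of_sq_eq_one (hG : IsPSL2Like p G) (hp : p % 4 = 3) {g : Perm (OnePoint (ZMod p))}
    (hg : g ∈ G) (hsq : g ^ 2 = 1) {x : OnePoint (ZMod p)} (hx : g x = x) : g = 1 := by
  have hodd : Odd (Nat.card ↥(G ⊓ stabilizer (Perm _) x)) := by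
    rw [hG.card_stabilizer hp]
    exact (Nat.odd_iff.mpr (by have := (Fact.out : p.Prime).eq_two_or_odd; omega)).mul
      (odd_div_two_of_mod_four_eq_three hp)
  have := eq_one_of_sq_eq_one_of_odd_card hodd (g := ⟨g, hg, hx⟩) (Subtype.ext hsq)
  exact congr_arg Subtype.val this

theorem exists_conj_ptrans_one_eq (hG : IsPSL2Like p G) (hp : p % 4 = 3)
    {g : Perm (OnePoint (ZMod p))} (hg : g ∈ G) (hinf : g OnePoint.infty = OnePoint.infty) :
    ∃ b, g * ptrans p 1 * g⁻¹ = ptrans p b := by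
  set S := G ⊓ stabilizer (Perm _) (OnePoint.infty : OnePoint (ZMod p))
  set T := (translation p).range
  have hTS : T ≤ S := by
    rintro _ ⟨a, rfl⟩
    exact ⟨hG.ptrans_mem _, rfl⟩
  have hT : Nat.card (T.subgroupOf S) = p := by
    rw [Nat.card_congr (Subgroup.subgroupOfEquivOfLe hTS).toEquiv,
      ← Nat.card_congr (MonoidHom.ofInjective translation_injective).toEquiv]
    simp [Nat.card_eq_fintype_card, ZMod.card]
  have hindex : (T.subgroupOf S).index < p := by
    have := (T.subgroupOf S).card_mul_index
    rw [hT, hG.card_stabilizer hp] at this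
    have := Nat.eq_of_mul_eq_mul_left (Fact.out : p.Prime).pos this
    omega
  have hnorm := (Subgroup.normal_subgroupOf_iff_le_normalizer hTS).mp
    (Subgroup.normal_of_card_eq_prime_of_index_lt hT hindex) (show g ∈ S from ⟨hg, hinf⟩)
  obtain ⟨b, hb⟩ := (Subgroup.mem_normalizer_iff.mp hnorm (ptrans p 1)).mp
    ⟨Multiplicative.ofAdd 1, rfl⟩
  exact ⟨b.toAdd, hb.symm⟩

theorem card_zeroInftyStabilizer (hG : IsPSL2Like p G) (hp : p % 4 = 3) :
    Nat.card (zeroInftyStabilizer G) = p / 2 := by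
  set S := G ⊓ stabilizer (Perm _) (OnePoint.infty : OnePoint (ZMod p))
  have horbit : orbit S (OnePoint.some (0 : ZMod p)) = Set.range OnePoint.some := by
    ext y
    constructor
    · rintro ⟨⟨g, hg, hinf⟩, rfl⟩
      exact Option.ne_none_iff_exists.mp fun h =>
        OnePoint.coe_ne_infty (0 : ZMod p) (g.injective (h.trans hinf.symm))
    · rintro ⟨z, rfl⟩
      exact ⟨⟨ptrans p z, hG.ptrans_mem z, rfl⟩, by simp [Subgroup.smul_def]⟩
  have := card_inf_stabilizer_mul_ncard_orbit S (OnePoint.some (0 : ZMod p))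
  rw [horbit, Set.ncard_range_of_injective OnePoint.coe_injective, hG.card_stabilizer hp] at this
  simp only [Nat.card_eq_fintype_card, ZMod.card] at this
  exact Nat.eq_of_mul_eq_mul_right (Fact.out : p.Prime).pos (this.trans (mul_comm _ _))

theorem zeroInftyStabilizer_eq_map_scale (hG : IsPSL2Like p G) (hp : p % 4 = 3) :
    zeroInftyStabilizer G = (rootsOfUnity (p / 2) (ZMod p)).map (scale p) := by
  refine Subgroup.eq_of_le_of_card_ge ?_ ?_
  · intro g hg
    obtain ⟨hgG, hinf, h0⟩ := mem_zeroInftyStabilizer.mp hg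
    obtain ⟨b, hb⟩ := hG.exists_conj_ptrans_one_eq hp hgG hinf
    obtain ⟨u, rfl⟩ := exists_eq_scale_of_conj_ptrans h0 hinf hb
    refine ⟨u, ?_, rfl⟩
    have hpow := pow_card_eq_one' (x := (⟨scale p u, hg⟩ : zeroInftyStabilizer G))
    rw [hG.card_zeroInftyStabilizer hp] at hpow
    exact scale_injective (by simpa using congr_arg Subtype.val hpow)
  · rw [hG.card_zeroInftyStabilizer hp, Subgroup.card_map_of_injective scale_injective]
    have : NeZero (p / 2) := ⟨by omega⟩
    exact card_rootsOfUnity _ _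

theorem scale_mem (hG : IsPSL2Like p G) (hp : p % 4 = 3) {u : (ZMod p)ˣ}
    (hu : u ∈ rootsOfUnity (p / 2) (ZMod p)) : scale p u ∈ G :=
  (mem_zeroInftyStabilizer.mp ((hG.zeroInftyStabilizer_eq_map_scale hp).ge ⟨u, hu, rfl⟩)).1

theorem exists_eq_scale (hG : IsPSL2Like p G) (hp : p % 4 = 3) {g : Perm (OnePoint (ZMod p))}
    (hg : g ∈ G) (hinf : g OnePoint.infty = OnePoint.infty)
    (h0 : g (OnePoint.some 0) = OnePoint.some 0) :
    ∃ u ∈ rootsOfUnity (p / 2) (ZMod p), scale p u = g :=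
  (hG.zeroInftyStabilizer_eq_map_scale hp).le (mem_zeroInftyStabilizer.mpr ⟨hg, hinf, h0⟩)

theorem card_rootsOfUnity_eq (hG : IsPSL2Like p G) (hp : p % 4 = 3) :
    Nat.card (rootsOfUnity (p / 2) (ZMod p)) = p / 2 := by
  rw [← Subgroup.card_map_of_injective scale_injective, ← hG.zeroInftyStabilizer_eq_map_scale hp,
    hG.card_zeroInftyStabilizer hp]

theorem exists_swapsZeroInfty (hG : IsPSL2Like p G) : ∃ τ ∈ G, SwapsZeroInfty τ := by
  obtain ⟨g, hg, hg0⟩ := hG.exists_apply_eq (OnePoint.some 0) OnePoint.infty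
  obtain ⟨u, hu⟩ : ∃ u, OnePoint.some u = g OnePoint.infty :=
    Option.ne_none_iff_exists.mp fun h => OnePoint.coe_ne_infty (0 : ZMod p)
      (g.injective (hg0.trans h.symm))
  refine ⟨ptrans p (-u) * g, G.mul_mem (hG.ptrans_mem _) hg, ?_, ?_⟩
  · simp [Perm.mul_apply, hg0]
  · simp [Perm.mul_apply, ← hu]

theorem exists_scale_eq_conj (hG : IsPSL2Like p G) (hp : p % 4 = 3)
    {τ : Perm (OnePoint (ZMod p))} (hτG : τ ∈ G) (hτ : SwapsZeroInfty τ) {u : (ZMod p)ˣ}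
    (hu : u ∈ rootsOfUnity (p / 2) (ZMod p)) :
    ∃ v ∈ rootsOfUnity (p / 2) (ZMod p), scale p v = τ * scale p u * τ⁻¹ :=
  hG.exists_eq_scale hp (G.mul_mem (G.mul_mem hτG (hG.scale_mem hp hu)) (G.inv_mem hτG))
    (hτ.conj_apply_infty (by simp)) (hτ.conj_apply_zero (by simp))

theorem exists_odd_conjScaleByPow (hG : IsPSL2Like p G) (hp : p % 4 = 3)
    {τ : Perm (OnePoint (ZMod p))} (hτG : τ ∈ G) (hτ : SwapsZeroInfty τ) :
    ∃ n, Odd n ∧ ConjScaleByPow n τ := by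
  obtain ⟨g, hg⟩ := IsCyclic.exists_monoid_generator (α := rootsOfUnity (p / 2) (ZMod p))
  obtain ⟨v, hv, hgv⟩ := hG.exists_scale_eq_conj hp hτG hτ g.2
  obtain ⟨m, hm⟩ := hg ⟨v, hv⟩
  have hτm : ConjScaleByPow m τ := by
    intro u hu
    obtain ⟨k, hk⟩ := hg ⟨u, hu⟩
    obtain rfl : (g : (ZMod p)ˣ) ^ k = u := congr_arg Subtype.val hk
    rw [map_pow, ← conj_pow, ← hgv, ← map_pow, ← pow_mul, mul_comm, pow_mul,
      ← show (g : (ZMod p)ˣ) ^ m = v from congr_arg Subtype.val hm]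
  rcases Nat.even_or_odd m with hme | hmo
  · refine ⟨m + p / 2, hme.add_odd (odd_div_two_of_mod_four_eq_three hp), fun u hu => ?_⟩
    rw [hτm u hu, pow_add, (mem_rootsOfUnity _ _).mp hu, mul_one]
  · exact ⟨m, hmo, hτm⟩

theorem exists_scale_eq_sq (hG : IsPSL2Like p G) (hp : p % 4 = 3)
    {τ : Perm (OnePoint (ZMod p))} (hτG : τ ∈ G) (hτ : SwapsZeroInfty τ) :
    ∃ s ∈ rootsOfUnity (p / 2) (ZMod p), scale p s = τ ^ 2 :=
  hG.exists_eq_scale hp (G.pow_mem hτG 2) (by simp [sq, Perm.mul_apply, hτ.1, hτ.2])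
    (by simp [sq, Perm.mul_apply, hτ.1, hτ.2])

theorem dvd_sq_sub_one (hG : IsPSL2Like p G) (hp : p % 4 = 3) {n : ℕ}
    {τ : Perm (OnePoint (ZMod p))} (hτG : τ ∈ G) (hτ : SwapsZeroInfty τ)
    (hτn : ConjScaleByPow n τ) : p / 2 ∣ n ^ 2 - 1 := by
  obtain ⟨s, -, hs⟩ := hG.exists_scale_eq_sq hp hτG hτ
  have hpow (u : rootsOfUnity (p / 2) (ZMod p)) : u ^ (n ^ 2) = u := by
    refine Subtype.ext (scale_injective ?_)
    have h := congr(τ * $(hτn u u.2) * τ⁻¹)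
    rw [hτn _ (pow_mem u.2 n), ← pow_mul, ← sq] at h
    rw [Subgroup.coe_pow, ← h, show τ * (τ * scale p u * τ⁻¹) * τ⁻¹ = τ ^ 2 * scale p u * (τ ^ 2)⁻¹
      by simp only [sq, mul_inv_rev, mul_assoc], ← hs, ← map_inv, ← map_mul, ← map_mul, mul_comm s,
      mul_inv_cancel_right]
  have := Monoid.exponent_dvd_of_forall_pow_eq_one (G := rootsOfUnity (p / 2) (ZMod p))
    (n := n ^ 2 - 1) fun u => by
      rcases eq_or_ne (n ^ 2) 0 with h0 | h0
      · rw [h0, Nat.zero_sub, pow_zero]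
      · exact mul_right_cancel (b := u) (by rw [pow_sub_one_mul h0, hpow, one_mul])
  rwa [IsCyclic.exponent_eq_card, hG.card_rootsOfUnity_eq hp] at this

theorem exists_involution (hG : IsPSL2Like p G) (hp : p % 4 = 3) :
    ∃ (n : ℕ) (σ : Perm (OnePoint (ZMod p))), σ ∈ G ∧ SwapsZeroInfty σ ∧ σ ^ 2 = 1 ∧
      Odd n ∧ p / 2 ∣ n ^ 2 - 1 ∧ ConjScaleByPow n σ := by
  obtain ⟨τ, hτG, hτ⟩ := hG.exists_swapsZeroInfty
  obtain ⟨n, hn, hτn⟩ := hG.exists_odd_conjScaleByPow hp hτG hτ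
  obtain ⟨s, hs, hsτ⟩ := hG.exists_scale_eq_sq hp hτG hτ
  have hsn : s ^ n = s := scale_injective (by rw [← hτn s hs, hsτ]; group)
  -- a square root `r` of `s` with `r ^ n = r`, so that `r⁻¹ ^ (n + 1) * s = 1`
  set r := s ^ ((p / 2 + 1) / 2)
  have hr : r ∈ rootsOfUnity (p / 2) (ZMod p) := pow_mem hs _
  have hr2 : r ^ 2 = s :=
    sq_pow_succ_div_two (odd_div_two_of_mod_four_eq_three hp) ((mem_rootsOfUnity _ _).mp hs)
  have hrn : r ^ n = r := by rw [← pow_mul, mul_comm, pow_mul, hsn]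
  refine ⟨n, scale p r⁻¹ * τ, G.mul_mem (hG.scale_mem hp (inv_mem hr)) hτG, hτ.scale_mul _, ?_,
    hn, hG.dvd_sq_sub_one hp hτG hτ hτn, hτn.scale_mul _⟩
  rw [hτn.sq_scale_mul (inv_mem hr), ← hsτ, ← map_mul, inv_pow, pow_succ, hrn, ← sq, hr2,
    inv_mul_cancel, map_one]

theorem apply_one_mem_Nset (hG : IsPSL2Like p G) (hp : p % 4 = 3) {n : ℕ}
    {σ : Perm (OnePoint (ZMod p))} (hσG : σ ∈ G) (hσ : SwapsZeroInfty σ) (hσ2 : σ ^ 2 = 1)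
    (hσn : ConjScaleByPow n σ) {c : ZMod p} (hc : σ (OnePoint.some 1) = OnePoint.some c) :
    c ∈ Nset p := by
  have hc0 : c ≠ 0 := by
    rintro rfl
    exact OnePoint.coe_ne_infty _ (σ.injective (hc.trans hσ.2.symm))
  refine ⟨hc0, fun hsq => ?_⟩
  set q := Units.mk0 c hc0
  have hq : q ∈ rootsOfUnity (p / 2) (ZMod p) :=
    mem_rootsOfUnity_iff_isSquare.mpr (by simpa [q] using hsq)
  have hqn : q ^ (n + 1) = 1 := by
    have h := hσn.apply_some_of_isSquare hc hc0 hsq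
    rw [← hc, ← Perm.mul_apply, ← sq, hσ2, Perm.one_apply] at h
    exact Units.ext (by simpa [q, pow_succ'] using (OnePoint.coe_injective h).symm)
  -- the square root `z` of `q` in `rootsOfUnity` is then a fixed point of `σ`
  set z := q ^ ((p / 2 + 1) / 2)
  have hz2 : z ^ 2 = q :=
    sq_pow_succ_div_two (odd_div_two_of_mod_four_eq_three hp) ((mem_rootsOfUnity _ _).mp hq)
  have hzn : z ^ (n + 1) = 1 := by rw [← pow_mul, mul_comm, pow_mul, hqn, one_pow]
  have hqz : q * z ^ n = z := by rw [← hz2, sq, mul_assoc, ← pow_succ', hzn, mul_one]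
  have hfix : σ (OnePoint.some (z : ZMod p)) = OnePoint.some (z : ZMod p) := by
    rw [hσn.apply_some_of_isSquare hc z.ne_zero
      (mem_rootsOfUnity_iff_isSquare.mp (pow_mem hq _))]
    exact congr_arg (fun u : (ZMod p)ˣ => OnePoint.some (u : ZMod p)) hqz
  exact hσ.ne_one (hG.eq_one_of_sq_eq_one hp hσG hσ2 hfix)

theorem exists_involution_apply_one_pow_eq_self (hG : IsPSL2Like p G) (hp : p % 4 = 3) :
    ∃ (n : ℕ) (σ : Perm (OnePoint (ZMod p))) (c : ZMod p), σ ∈ G ∧ SwapsZeroInfty σ ∧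
      σ ^ 2 = 1 ∧ Odd n ∧ p / 2 ∣ n ^ 2 - 1 ∧ ConjScaleByPow n σ ∧
      σ (OnePoint.some 1) = OnePoint.some c ∧ c ^ n = c := by
  obtain ⟨n, σ, hσG, hσ, hσ2, hn, hdvd, hσn⟩ := hG.exists_involution hp
  obtain ⟨c, hc⟩ := hσ.exists_apply_some one_ne_zero
  have hcN := hG.apply_one_mem_Nset hp hσG hσ hσ2 hσn hc
  obtain ⟨u, hud, hun, huc⟩ := exists_pow_succ_eq_one_and_mul_pow_eq_self
    (odd_div_two_of_mod_four_eq_three hp) hn hdvd ((mem_Nset_iff (by omega)).mp hcN)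
  set v := Units.ofPowEqOne u (p / 2) hud (by have := (Fact.out : p.Prime).two_le; omega)
  have hv : v ∈ rootsOfUnity (p / 2) (ZMod p) := Units.pow_ofPowEqOne _ _
  refine ⟨n, scale p v * σ, u * c, G.mul_mem (hG.scale_mem hp hv) hσG, hσ.scale_mul v, ?_, hn,
    hdvd, hσn.scale_mul v, by simp [Perm.mul_apply, hc, v], huc⟩
  rw [hσn.sq_scale_mul hv, hσ2, mul_one, show v ^ (n + 1) = 1 from Units.ext (by simp [v, hun]),
    map_one]

end IsPSL2Like

theorem exists_lambda_power_form_general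
    (p : ℕ) [Fact p.Prime] (hp3 : p % 4 = 3)
    (G : Subgroup (Equiv.Perm (OnePoint (ZMod p))))
    (htrans : ∀ x y : OnePoint (ZMod p), ∃ g ∈ G, g x = y)
    (hcard : Nat.card G = (p ^ 3 - p) / 2)
    (htransl : ∀ a : ZMod p, ptrans p a ∈ G) :
    ∃ (n : ℕ) (lam : Equiv.Perm (OnePoint (ZMod p))) (c : ZMod p),
      Odd n ∧ (p - 1) / 2 ∣ n ^ 2 - 1 ∧
      lam ∈ G ∧ lam (OnePoint.some (0 : ZMod p)) = OnePoint.infty ∧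
      lam OnePoint.infty = OnePoint.some (0 : ZMod p) ∧
      orderOf lam = 2 ∧ c ∈ Nset p ∧
      (∀ z ∈ Rset p, lam (OnePoint.some z) = OnePoint.some (c * z ^ n)) ∧
      (∀ z ∈ Nset p, lam (OnePoint.some z) = OnePoint.some (c⁻¹ * z ^ n)) ∧
      c ^ n = c := by
  have hG : IsPSL2Like p G := ⟨htrans, hcard, htransl⟩
  obtain ⟨n, σ, c, hσG, hσ, hσ2, hn, hdvd, hσn, hc, hcn⟩ :=
    hG.exists_involution_apply_one_pow_eq_self hp3
  have hcN := hG.apply_one_mem_Nset hp3 hσG hσ hσ2 hσn hc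
  refine ⟨n, σ, c, hn, by rwa [show (p - 1) / 2 = p / 2 by omega], hσG, hσ.1, hσ.2,
    orderOf_eq_prime hσ2 hσ.ne_one, hcN, fun z hz => hσn.apply_some_of_isSquare hc hz.1 hz.2,
    fun z hz => ?_, hcn⟩
  rw [hσn.apply_some_of_mem_Nset (by omega) hσ2 hc hcN hz, mul_pow, inv_pow, hcn]

theorem exists_lambda_power_form
    (p : ℕ) [Fact p.Prime] (hp2 : p ≠ 2) (hp3 : p % 4 = 3)
    (G : Subgroup (Equiv.Perm (OnePoint (ZMod p))))
    (htrans : ∀ x y : OnePoint (ZMod p), ∃ g ∈ G, g x = y)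
    (hcard : Nat.card G = (p ^ 3 - p) / 2)
    (htransl : ∀ a : ZMod p, ptrans p a ∈ G) :
    ∃ (n : ℕ) (lam : Equiv.Perm (OnePoint (ZMod p))) (c : ZMod p),
      Odd n ∧ (p - 1) / 2 ∣ n ^ 2 - 1 ∧
      lam ∈ G ∧ lam (OnePoint.some (0 : ZMod p)) = OnePoint.infty ∧
      lam OnePoint.infty = OnePoint.some (0 : ZMod p) ∧
      orderOf lam = 2 ∧ c ∈ Nset p ∧
      (∀ z ∈ Rset p, lam (OnePoint.some z) = OnePoint.some (c * z ^ n)) ∧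
      (∀ z ∈ Nset p, lam (OnePoint.some z) = OnePoint.some (c⁻¹ * z ^ n)) ∧
      c ^ n = c :=
  exists_lambda_power_form_general p hp3 G htrans hcard htransl
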